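/- arXiv:1912.03387 — 3 statements merged into one kernel-verified Lean document; each statement's English description precedes it below -/
import Mathlib

section
/- Let P_{XY} be a joint probability measure on 𝒳×𝒴 with marginals P_X, P_Y, and assume that the set A₃ = {(x,y) ∈ A : P_X(A_y) = P_Y(A_x) = 0} has P_{XY}-measure zero for every measurable A with (P_X×P_Y)(A) = 0 (nonsingularity). Then P_{XY} is absolutely continuous with respect to P_X × P_Y, and hence the Radon–Nikodym derivative dP_{XY}/d(P_X×P_Y) exists. -/
open MeasureTheory

/-! Let `A` be `P_X × P_Y`-null. By Fubini, `P_X`-almost every vertical section of `A` is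
`P_Y`-null and `P_Y`-almost every horizontal section is `P_X`-null; since `P_X`, `P_Y` are the
marginals, both properties then hold at `P_{XY}`-almost every point. So `A` is contained,
up to a `P_{XY}`-null set, in the set `A₃` of its points with two null sections, which is
`P_{XY}`-null by nonsingularity. -/

namespace MeasureTheory.Measure

variable {α β : Type*} [MeasurableSpace α] [MeasurableSpace β] {μ : Measure α} {ν : Measure β}

theorem ae_ae_swap_of_ae_prod [SFinite μ] [SFinite ν] {p : α × β → Prop}
    (h : ∀ᵐ z ∂μ.prod ν, p z) : ∀ᵐ y ∂ν, ∀ᵐ x ∂μ, p (x, y) := by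
  rw [← prod_swap (μ := ν) (ν := μ)] at h
  exact ae_ae_of_ae_prod (ae_of_ae_map measurable_swap.aemeasurable h)

theorem ae_measure_sections_eq_zero_of_prod_null [SFinite μ] [SFinite ν]
    {ρ : Measure (α × β)} (hρμ : ρ.map Prod.fst ≪ μ) (hρν : ρ.map Prod.snd ≪ ν)
    {s : Set (α × β)} (hs : μ.prod ν s = 0) :
    ∀ᵐ p ∂ρ, μ {x | (x, p.2) ∈ s} = 0 ∧ ν {y | (p.1, y) ∈ s} = 0 := by
  have hs' := measure_eq_zero_iff_ae_notMem.1 hs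
  have hhoriz : ∀ᵐ y ∂ν, μ {x | (x, y) ∈ s} = 0 :=
    (ae_ae_swap_of_ae_prod hs').mono fun _ ↦ measure_eq_zero_iff_ae_notMem.2
  have hvert : ∀ᵐ x ∂μ, ν {y | (x, y) ∈ s} = 0 :=
    (ae_ae_of_ae_prod hs').mono fun _ ↦ measure_eq_zero_iff_ae_notMem.2
  filter_upwards [ae_of_ae_map measurable_snd.aemeasurable (hρν.ae_le hhoriz),
    ae_of_ae_map measurable_fst.aemeasurable (hρμ.ae_le hvert)] with p hp₂ hp₁
  exact ⟨hp₂, hp₁⟩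

end MeasureTheory.Measure

theorem stmt1_general {X Y : Type*} [MeasurableSpace X] [MeasurableSpace Y]
    (P_XY : Measure (X × Y)) (P_X : Measure X) (P_Y : Measure Y)
    [IsProbabilityMeasure P_XY]
    (hX : P_XY.map Prod.fst = P_X) (hY : P_XY.map Prod.snd = P_Y)
    (hns : ∀ A : Set (X × Y), MeasurableSet A → (P_X.prod P_Y) A = 0 →
      P_XY {p : X × Y | p ∈ A ∧ P_X {x | (x, p.2) ∈ A} = 0 ∧
        P_Y {y | (p.1, y) ∈ A} = 0} = 0) :
    P_XY ≪ P_X.prod P_Y := by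
  subst hX hY
  refine Measure.AbsolutelyContinuous.mk fun A hA hA0 ↦ measure_mono_null_ae ?_ (hns A hA hA0)
  filter_upwards [Measure.ae_measure_sections_eq_zero_of_prod_null
    Measure.AbsolutelyContinuous.rfl Measure.AbsolutelyContinuous.rfl hA0] with p hp hpA
  exact ⟨hpA, hp⟩

/-- If the joint probability measure `P_{XY}` is nonsingular, i.e. for every
measurable `A` with `(P_X × P_Y)(A) = 0` the set
`A₃ = {(x,y) ∈ A : P_X(A_y) = P_Y(A_x) = 0}` is `P_{XY}`-null, then
`P_{XY} ≪ P_X × P_Y`, hence the Radon–Nikodym derivative exists. -/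
theorem stmt1 {X Y : Type*} [MetricSpace X] [MeasurableSpace X] [BorelSpace X]
    [MetricSpace Y] [MeasurableSpace Y] [BorelSpace Y]
    (P_XY : Measure (X × Y)) (P_X : Measure X) (P_Y : Measure Y)
    [IsProbabilityMeasure P_XY]
    (hX : P_XY.map Prod.fst = P_X) (hY : P_XY.map Prod.snd = P_Y)
    (hns : ∀ A : Set (X × Y), MeasurableSet A → (P_X.prod P_Y) A = 0 →
      P_XY {p : X × Y | p ∈ A ∧ P_X {x | (x, p.2) ∈ A} = 0 ∧
        P_Y {y | (p.1, y) ∈ A} = 0} = 0) :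
    P_XY ≪ P_X.prod P_Y :=
  stmt1_general P_XY P_X P_Y hX hY hns
end

section
/- Let W ~ Binomial(n, p) with 0 < p < 1 and let k ≥ 2 be an integer, with n ≥ 4. Then |E[log((W + k)/(np + k))]| ≤ 1/(np + k). -/
/-!
Subtracting the mean-zero linear term `(W - np)/c`, with `c = np + k`, costs nothing, and
`log (y / c)` lies between `(y - c)/y` and `(y - c)/c`; so the expectation is bounded by
`E[(W - np)² / (W + 2)] / c`, and it remains to show `E[(W - np)² / (W + 2)] ≤ 1`.
For this, `(n + 1)(n + 2)p² P(W = j) / (j + 2) = (j + 1) P(V = j + 2)` with `V ~ Bin(n + 2, p)`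
turns the expectation into the cubic moment `E[(V - 1)(V - np - 2)²]`, computed exactly from
factorial moments, plus the boundary term `(np + 2)²(1 - p)^(n + 2) ≤ 4(1 - p)²`.
-/

open Finset Real

theorem Nat.choose_mul_descFactorial {m i r : ℕ} (hri : r ≤ i) :
    m.choose i * i.descFactorial r = m.descFactorial r * (m - r).choose (i - r) := by
  rw [Nat.descFactorial_eq_factorial_mul_choose, Nat.descFactorial_eq_factorial_mul_choose,
    mul_assoc, mul_left_comm, Nat.choose_mul hri]

theorem sum_choose_mul_pow_mul_descFactorial {R : Type*} [CommRing R] (m r : ℕ) (p q : R) :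
    ∑ i ∈ range (m + 1), (m.choose i : R) * p ^ i * q ^ (m - i) * (i.descFactorial r : R)
      = (m.descFactorial r : R) * p ^ r * (p + q) ^ (m - r) := by
  rcases lt_or_ge m r with hmr | hrm
  · rw [Nat.descFactorial_eq_zero_iff_lt.2 hmr, Nat.cast_zero, zero_mul, zero_mul]
    refine sum_eq_zero fun i hi => ?_
    rw [Nat.descFactorial_eq_zero_iff_lt.2 (by grind), Nat.cast_zero, mul_zero]
  rw [show m + 1 = r + (m - r + 1) by omega, sum_range_add, add_pow, mul_sum,
    sum_eq_zero fun i hi => by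
      rw [Nat.descFactorial_eq_zero_iff_lt.2 (mem_range.1 hi), Nat.cast_zero, mul_zero], zero_add]
  refine sum_congr rfl fun j _ => ?_
  have hchoose := Nat.choose_mul_descFactorial (m := m) (i := r + j) (r := r) (by omega)
  rw [Nat.add_sub_cancel_left] at hchoose
  replace hchoose := congrArg (Nat.cast (R := R)) hchoose
  push_cast at hchoose
  rw [show m - (r + j) = m - r - j by omega, pow_add]
  linear_combination (p ^ r * p ^ j * q ^ (m - r - j)) * hchoose

theorem Nat.cast_descFactorial_three {R : Type*} [CommRing R] (a : ℕ) :
    (a.descFactorial 3 : R) = a * (a - 1) * (a - 2) := by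
  rw [← descPochhammer_eval_eq_descFactorial]
  simp [descPochhammer_succ_right]

theorem abs_log_div_sub_div_le {y c : ℝ} (hy : 0 < y) (hc : 0 < c) :
    |log (y / c) - (y - c) / c| ≤ (y - c) ^ 2 / (c * y) := by
  have hupper : log (y / c) ≤ (y - c) / c := by
    have := log_le_sub_one_of_pos (div_pos hy hc)
    rwa [div_sub_one hc.ne'] at this
  have hlower : (y - c) / y ≤ log (y / c) := by
    have := one_sub_inv_le_log_of_pos (div_pos hy hc)
    rwa [inv_div, one_sub_div hy.ne'] at this
  have hgap : (y - c) / c - (y - c) / y = (y - c) ^ 2 / (c * y) := by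
    field_simp
  rw [abs_le]
  constructor <;> nlinarith [div_nonneg (sq_nonneg (y - c)) (mul_pos hc hy).le]

theorem abs_log_add_div_sub_le {μ : ℝ} (hμ : 0 ≤ μ) {k : ℕ} (hk : 2 ≤ k) (j : ℕ) :
    |log ((j + k) / (μ + k)) - (j - μ) / (μ + k)| ≤ (j - μ) ^ 2 / (j + 2) / (μ + k) := by
  have hlog := abs_log_div_sub_div_le (by positivity : (0 : ℝ) < j + k)
    (by positivity : (0 : ℝ) < μ + k)
  rw [show (j + k : ℝ) - (μ + k) = j - μ by ring] at hlog
  refine hlog.trans ?_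
  rw [div_div, mul_comm (μ + k)]
  gcongr
  exact_mod_cast hk

theorem sq_mul_add_two_mul_one_sub_pow_le_four (n : ℕ) {p : ℝ} (hp0 : 0 ≤ p) (hp1 : p ≤ 1) :
    (n * p + 2) ^ 2 * (1 - p) ^ n ≤ 4 := by
  set x : ℝ := n * p
  have hx : 0 ≤ x := by positivity
  have hsq : (x + 2) ^ 2 ≤ 4 * exp x := by nlinarith [quadratic_le_exp_of_nonneg hx]
  have hpow : (1 - p) ^ n ≤ exp (-x) := by
    calc (1 - p) ^ n ≤ exp (-p) ^ n := pow_le_pow_left₀ (by linarith) (one_sub_le_exp_neg p) n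
      _ = exp (-x) := by rw [← exp_nat_mul, mul_neg]
  calc (x + 2) ^ 2 * (1 - p) ^ n ≤ 4 * exp x * exp (-x) := by
        gcongr
      _ = 4 := by rw [mul_assoc, ← exp_add, add_neg_cancel, exp_zero, mul_one]

def binomWeight (n : ℕ) (p : ℝ) (j : ℕ) : ℝ := n.choose j * p ^ j * (1 - p) ^ (n - j)

section binomWeight

variable (n : ℕ) (p : ℝ)

theorem binomWeight_nonneg (hp0 : 0 ≤ p) (hp1 : p ≤ 1) (j : ℕ) : 0 ≤ binomWeight n p j := by
  unfold binomWeight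
  have : 0 ≤ 1 - p := by linarith
  positivity

theorem sum_binomWeight_mul_descFactorial (r : ℕ) :
    ∑ j ∈ range (n + 1), binomWeight n p j * j.descFactorial r = n.descFactorial r * p ^ r := by
  simp only [binomWeight]
  rw [sum_choose_mul_pow_mul_descFactorial, add_sub_cancel, one_pow, mul_one]

theorem sum_binomWeight : ∑ j ∈ range (n + 1), binomWeight n p j = 1 := by
  simpa using sum_binomWeight_mul_descFactorial n p 0

theorem sum_binomWeight_mul_sub_mean :
    ∑ j ∈ range (n + 1), binomWeight n p j * (j - n * p) = 0 := by
  have hmean := sum_binomWeight_mul_descFactorial n p 1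
  simp only [Nat.descFactorial_one, pow_one] at hmean
  simp only [mul_sub, sum_sub_distrib, ← sum_mul, hmean, sum_binomWeight, one_mul, sub_self]

theorem sum_binomWeight_mul_sub_one_mul_sub_sq (b : ℝ) :
    ∑ i ∈ range (n + 1), binomWeight n p i * ((i - 1) * (i - b) ^ 2)
      = n * (n - 1) * (n - 2) * p ^ 3 + (2 - 2 * b) * (n * (n - 1) * p ^ 2)
        + b ^ 2 * (n * p) - b ^ 2 := by
  have h0 := sum_binomWeight_mul_descFactorial n p 0
  have h1 := sum_binomWeight_mul_descFactorial n p 1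
  have h2 := sum_binomWeight_mul_descFactorial n p 2
  have h3 := sum_binomWeight_mul_descFactorial n p 3
  simp only [Nat.cast_descFactorial_three, Nat.cast_descFactorial_two, Nat.descFactorial_one,
    Nat.descFactorial_zero, Nat.cast_one, mul_one, pow_one, pow_zero] at h0 h1 h2 h3
  calc ∑ i ∈ range (n + 1), binomWeight n p i * ((i - 1) * (i - b) ^ 2)
      = ∑ i ∈ range (n + 1), (binomWeight n p i * (i * (i - 1) * (i - 2))
          + (2 - 2 * b) * (binomWeight n p i * (i * (i - 1)))
          + b ^ 2 * (binomWeight n p i * i) - b ^ 2 * binomWeight n p i) :=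
        sum_congr rfl fun i _ => by ring
    _ = _ := by
        simp only [sum_add_distrib, sum_sub_distrib, ← mul_sum, h0, h1, h2, h3, mul_one]

theorem binomWeight_add_two (j : ℕ) :
    (n + 1) * (n + 2) * p ^ 2 * binomWeight n p j
      = (j + 1) * (j + 2) * binomWeight (n + 2) p (j + 2) := by
  have hchoose : (n + 1) * (n + 2) * n.choose j = (j + 1) * (j + 2) * (n + 2).choose (j + 2) := by
    have h1 := Nat.add_one_mul_choose_eq n j
    have h2 := Nat.add_one_mul_choose_eq (n + 1) (j + 1)
    grind
  replace hchoose := congrArg (Nat.cast (R := ℝ)) hchoose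
  push_cast at hchoose
  rw [binomWeight, binomWeight, Nat.add_sub_add_right, pow_add]
  linear_combination (p ^ j * p ^ 2 * (1 - p) ^ (n - j)) * hchoose

theorem sum_binomWeight_mul_sq_sub_div_le_one (hp0 : 0 < p) (hp1 : p ≤ 1) :
    ∑ j ∈ range (n + 1), binomWeight n p j * ((j - n * p) ^ 2 / (j + 2)) ≤ 1 := by
  set b : ℝ := n * p + 2
  set F : ℕ → ℝ := fun i => binomWeight (n + 2) p i * ((i - 1) * (i - b) ^ 2)
  have hshift : (n + 1) * (n + 2) * p ^ 2 *
      ∑ j ∈ range (n + 1), binomWeight n p j * ((j - n * p) ^ 2 / (j + 2))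
        = ∑ j ∈ range (n + 1), F (j + 2) := by
    rw [mul_sum]
    refine sum_congr rfl fun j _ => ?_
    have hw := binomWeight_add_two n p j
    simp only [F, b]
    push_cast
    field_simp
    linear_combination ((j : ℝ) - n * p) ^ 2 * hw
  have hsplit : ∑ i ∈ range (n + 2 + 1), F i
      = ∑ j ∈ range (n + 1), F (j + 2) - b ^ 2 * (1 - p) ^ (n + 2) := by
    have hF1 : F 1 = 0 := by simp [F]
    have hF0 : F 0 = -(b ^ 2 * (1 - p) ^ (n + 2)) := by simp [F, binomWeight, mul_comm]
    rw [sum_range_succ', sum_range_succ', zero_add, hF1, hF0]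
    ring
  have hcubic := sum_binomWeight_mul_sub_one_mul_sub_sq (n + 2) p b
  have htail : b ^ 2 * (1 - p) ^ (n + 2) ≤ 4 * (1 - p) ^ 2 := by
    rw [pow_add, ← mul_assoc]
    gcongr
    exact sq_mul_add_two_mul_one_sub_pow_le_four n hp0.le hp1
  refine le_of_mul_le_mul_left ?_ (by positivity : (0 : ℝ) < (n + 1) * (n + 2) * p ^ 2)
  rw [hshift, mul_one]
  push_cast at hcubic
  -- `(n + 1)(n + 2)p² = E[(V - 1)(V - b)²] + 4(1 - p)² + (n + 2)(np³ + p²)` identically in `n, p`.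
  have hslack : 0 ≤ (n + 2) * (n * p ^ 3 + p ^ 2) := by positivity
  linarith

end binomWeight

theorem stmt5_general (n k : ℕ) (p : ℝ) (hp : 0 < p) (hp1 : p < 1)
    (hk : 2 ≤ k) :
    |∑ j ∈ Finset.range (n + 1),
        (n.choose j : ℝ) * p ^ j * (1 - p) ^ (n - j) *
          Real.log ((j + k) / (n * p + k))|
      ≤ 1 / (n * p + k) := by
  set c : ℝ := n * p + k
  have hc : 0 < c := by positivity
  have hw := binomWeight_nonneg n p hp.le hp1.le
  have hcenter : ∑ j ∈ range (n + 1), binomWeight n p j * log ((j + k) / c)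
      = ∑ j ∈ range (n + 1), binomWeight n p j * (log ((j + k) / c) - (j - n * p) / c) := by
    rw [← sub_zero (∑ j ∈ range (n + 1), binomWeight n p j * log ((j + k) / c)), ← zero_div c,
      ← sum_binomWeight_mul_sub_mean n p, sum_div, ← sum_sub_distrib]
    exact sum_congr rfl fun j _ => by ring
  show |∑ j ∈ range (n + 1), binomWeight n p j * log ((j + k) / c)| ≤ 1 / c
  calc |∑ j ∈ range (n + 1), binomWeight n p j * log ((j + k) / c)|
      ≤ ∑ j ∈ range (n + 1), binomWeight n p j * |log ((j + k) / c) - (j - n * p) / c| := by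
        rw [hcenter]
        refine (abs_sum_le_sum_abs _ _).trans_eq (sum_congr rfl fun j _ => ?_)
        rw [abs_mul, abs_of_nonneg (hw j)]
    _ ≤ ∑ j ∈ range (n + 1), binomWeight n p j * ((j - n * p) ^ 2 / (j + 2) / c) := by
        gcongr with j
        exacts [hw j, abs_log_add_div_sub_le (by positivity) hk j]
    _ = (∑ j ∈ range (n + 1), binomWeight n p j * ((j - n * p) ^ 2 / (j + 2))) / c := by
        simp only [sum_div, mul_div_assoc]
    _ ≤ 1 / c := by
        gcongr
        exact sum_binomWeight_mul_sq_sub_div_le_one n p hp hp1.le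

/-- For `W ~ Binomial(n, p)` with `0 < p < 1`, an integer `k ≥ 2`, and `n ≥ 4`:
`|E[log((W + k)/(np + k))]| ≤ 1/(np + k)`. -/
theorem stmt5 (n k : ℕ) (p : ℝ) (hp : 0 < p) (hp1 : p < 1)
    (hk : 2 ≤ k) (hn : 4 ≤ n) :
    |∑ j ∈ Finset.range (n + 1),
        (n.choose j : ℝ) * p ^ j * (1 - p) ^ (n - j) *
          Real.log ((j + k) / (n * p + k))|
      ≤ 1 / (n * p + k) :=
  stmt5_general n k p hp hp1 hk
end

section
/- Suppose W_n − k ~ Binomial(n − k − 1, p) where k ≥ p/(1−p) and 0 < p < 1, and let ψ be the digamma function. Then |E[ψ(W_n)] − log(np)| ≤ 2/k + k/(np). -/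
/-!
For `x > 0`, convexity of `log ∘ Γ` squeezes `ψ(x)` between the slopes of `log Γ` on `[x - 1, x]`
and `[x, x + 1]`, which are `log x - 1/x` and `log x`. Write `W = J + k` with `J ~ Bin(m, p)`,
of mean `μ = mp + k`. The tangent line of `log` at `μ` bounds `E log W ≤ log μ`, and
`log x ≥ log μ + (x - μ)/μ - (x - μ)²/(kμ)` for `x ≥ k` gives `E log W ≥ log μ - Var W/(kμ)`,
with `Var W = mp(1 - p) ≤ μ`; hence `log μ - 2/k ≤ E ψ(W) ≤ log μ`. Finally `k ≥ p/(1-p)` is exactly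
`np ≤ μ`, while `μ ≤ np + k`.
-/

open Finset Real

noncomputable def digamma (x : ℝ) : ℝ := deriv (fun y => Real.log (Real.Gamma y)) x

open Set

lemma differentiableAt_log_Gamma {x : ℝ} (hx : 0 < x) :
    DifferentiableAt ℝ (fun y => log (Gamma y)) x :=
  (differentiableAt_Gamma fun m => (neg_nonpos.2 m.cast_nonneg).trans_lt hx |>.ne').log
    (Gamma_pos_of_pos hx).ne'

lemma log_Gamma_add_one {x : ℝ} (hx : 0 < x) :
    log (Gamma (x + 1)) = log (Gamma x) + log x := by
  rw [Gamma_add_one hx.ne', log_mul hx.ne' (Gamma_pos_of_pos hx).ne', add_comm]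

lemma digamma_add_one {x : ℝ} (hx : 0 < x) : digamma (x + 1) = digamma x + x⁻¹ := by
  unfold digamma
  rw [← deriv_comp_add_const, ← deriv_log,
    ← deriv_add (differentiableAt_log_Gamma hx) (differentiableAt_log hx.ne')]
  refine Filter.EventuallyEq.deriv_eq ?_
  filter_upwards [eventually_gt_nhds hx] with y hy
  exact log_Gamma_add_one hy

lemma digamma_le_log {x : ℝ} (hx : 0 < x) : digamma x ≤ log x := by
  have h := convexOn_log_Gamma.deriv_le_slope (mem_Ioi.2 hx) (mem_Ioi.2 (by linarith))
    (lt_add_one x) (differentiableAt_log_Gamma hx)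
  rw [slope_def_field, Function.comp_apply, Function.comp_apply, log_Gamma_add_one hx] at h
  simpa [digamma, Function.comp_def] using h

lemma log_sub_inv_le_digamma {x : ℝ} (hx : 0 < x) : log x - x⁻¹ ≤ digamma x := by
  have h := convexOn_log_Gamma.slope_le_deriv (mem_Ioi.2 hx) (mem_Ioi.2 (by linarith))
    (lt_add_one x) (differentiableAt_log_Gamma (by linarith))
  rw [slope_def_field, Function.comp_apply, Function.comp_apply, log_Gamma_add_one hx] at h
  have h' : log x ≤ digamma (x + 1) := by simpa [digamma, Function.comp_def] using h
  linarith [digamma_add_one hx]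

lemma log_le_log_add_sub_div {x y : ℝ} (hx : 0 < x) (hy : 0 < y) :
    log x ≤ log y + (x - y) / y := by
  have h := log_le_sub_one_of_pos (div_pos hx hy)
  rw [log_div hx.ne' hy.ne', div_sub_one hy.ne'] at h
  linarith

-- `1 - y/x = (x - y)/y - (x - y)²/(xy)` exactly, so this is `1 - 1/t ≤ log t` at `t = x/y`.
lemma log_add_sub_div_sub_sq_div_le_log {x y : ℝ} (hx : 0 < x) (hy : 0 < y) :
    log y + (x - y) / y - (x - y) ^ 2 / (x * y) ≤ log x := by
  have h := one_sub_inv_le_log_of_pos (div_pos hx hy)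
  rw [log_div hx.ne' hy.ne', inv_div] at h
  have hid : (x - y) / y - (x - y) ^ 2 / (x * y) = 1 - y / x := by field_simp; ring
  linarith

section WeightedSums

variable {ι : Type*} {s : Finset ι} {w X : ι → ℝ} {μ : ℝ}

lemma sum_mul_quadratic (hw : ∑ i ∈ s, w i = 1) (hmean : ∑ i ∈ s, w i * X i = μ)
    (a b c : ℝ) :
    ∑ i ∈ s, w i * (a + b * (X i - μ) - c * (X i - μ) ^ 2) =
      a - c * ∑ i ∈ s, w i * (X i - μ) ^ 2 := by
  have hcentred : ∑ i ∈ s, w i * (X i - μ) = 0 := by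
    simp only [mul_sub, sum_sub_distrib, ← sum_mul, hmean, hw, one_mul, sub_self]
  calc ∑ i ∈ s, w i * (a + b * (X i - μ) - c * (X i - μ) ^ 2)
      = a * ∑ i ∈ s, w i + b * ∑ i ∈ s, w i * (X i - μ) - c * ∑ i ∈ s, w i * (X i - μ) ^ 2 := by
        simp only [mul_sum, ← sum_add_distrib, ← sum_sub_distrib]
        exact sum_congr rfl fun i _ => by ring
    _ = a - c * ∑ i ∈ s, w i * (X i - μ) ^ 2 := by rw [hw, hcentred]; ring

lemma sum_mul_le_of_le_affine {f : ι → ℝ} {a b : ℝ} (hw0 : ∀ i ∈ s, 0 ≤ w i)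
    (hw : ∑ i ∈ s, w i = 1) (hmean : ∑ i ∈ s, w i * X i = μ)
    (hf : ∀ i ∈ s, f i ≤ a + b * (X i - μ)) :
    ∑ i ∈ s, w i * f i ≤ a := by
  have h := sum_mul_quadratic hw hmean a b 0
  simp only [zero_mul, sub_zero] at h
  rw [← h]
  exact sum_le_sum fun i hi => mul_le_mul_of_nonneg_left (hf i hi) (hw0 i hi)

lemma sub_mul_sum_le_sum_mul_of_quadratic_le {f : ι → ℝ} {a b c : ℝ} (hw0 : ∀ i ∈ s, 0 ≤ w i)
    (hw : ∑ i ∈ s, w i = 1) (hmean : ∑ i ∈ s, w i * X i = μ)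
    (hf : ∀ i ∈ s, a + b * (X i - μ) - c * (X i - μ) ^ 2 ≤ f i) :
    a - c * ∑ i ∈ s, w i * (X i - μ) ^ 2 ≤ ∑ i ∈ s, w i * f i := by
  rw [← sum_mul_quadratic hw hmean a b c]
  exact sum_le_sum fun i hi => mul_le_mul_of_nonneg_left (hf i hi) (hw0 i hi)

end WeightedSums

section Binomial

open Polynomial

variable (m : ℕ) (p : ℝ)

lemma eval_bernsteinPolynomial (j : ℕ) :
    (bernsteinPolynomial ℝ m j).eval p = (m.choose j : ℝ) * p ^ j * (1 - p) ^ (m - j) := by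
  simp [bernsteinPolynomial]

lemma eval_bernsteinPolynomial_nonneg (hp0 : 0 ≤ p) (hp1 : p ≤ 1) (j : ℕ) :
    0 ≤ (bernsteinPolynomial ℝ m j).eval p := by
  rw [eval_bernsteinPolynomial]
  have : 0 ≤ 1 - p := sub_nonneg.2 hp1
  positivity

lemma sum_eval_bernsteinPolynomial :
    ∑ j ∈ range (m + 1), (bernsteinPolynomial ℝ m j).eval p = 1 := by
  simpa [eval_finsetSum] using congrArg (eval p) (bernsteinPolynomial.sum ℝ m)

lemma sum_eval_bernsteinPolynomial_mul_add (κ : ℝ) :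
    ∑ j ∈ range (m + 1), (bernsteinPolynomial ℝ m j).eval p * (j + κ) = m * p + κ := by
  have h := congrArg (eval p) (bernsteinPolynomial.sum_smul ℝ m)
  simp only [eval_finsetSum, nsmul_eq_mul, eval_mul, eval_natCast, eval_X] at h
  simp only [mul_add, sum_add_distrib, ← sum_mul, sum_eval_bernsteinPolynomial, one_mul]
  rw [← h]
  exact congrArg (· + κ) (sum_congr rfl fun j _ => mul_comm _ _)

lemma sum_eval_bernsteinPolynomial_mul_sq (κ : ℝ) :
    ∑ j ∈ range (m + 1), (bernsteinPolynomial ℝ m j).eval p * (j + κ - (m * p + κ)) ^ 2 =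
      m * p * (1 - p) := by
  have h := congrArg (eval p) (bernsteinPolynomial.variance ℝ m)
  simp only [eval_finsetSum, eval_mul, eval_pow, eval_sub, eval_X, eval_natCast,
    eval_one, nsmul_eq_mul] at h
  rw [← h]
  exact sum_congr rfl fun j _ => by ring

end Binomial

section DigammaOfBinomial

variable (m : ℕ) {p κ : ℝ}

lemma sum_eval_bernsteinPolynomial_mul_digamma_le (hp0 : 0 ≤ p) (hp1 : p ≤ 1) (hκ : 0 < κ) :
    ∑ j ∈ range (m + 1), (bernsteinPolynomial ℝ m j).eval p * digamma (j + κ) ≤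
      log (m * p + κ) := by
  have hμ : 0 < m * p + κ := by positivity
  refine sum_mul_le_of_le_affine (fun j _ => eval_bernsteinPolynomial_nonneg m p hp0 hp1 j)
    (sum_eval_bernsteinPolynomial m p) (sum_eval_bernsteinPolynomial_mul_add m p κ)
    (b := (m * p + κ)⁻¹) fun j _ => ?_
  have hx : 0 < (j : ℝ) + κ := by positivity
  calc digamma (j + κ) ≤ log (j + κ) := digamma_le_log hx
    _ ≤ log (m * p + κ) + (j + κ - (m * p + κ)) / (m * p + κ) := log_le_log_add_sub_div hx hμ
    _ = _ := by ring

lemma log_sub_two_div_le_sum_eval_bernsteinPolynomial_mul_digamma (hp0 : 0 ≤ p) (hp1 : p ≤ 1)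
    (hκ : 0 < κ) :
    log (m * p + κ) - 2 / κ ≤
      ∑ j ∈ range (m + 1), (bernsteinPolynomial ℝ m j).eval p * digamma (j + κ) := by
  set μ := m * p + κ
  have hμ : 0 < μ := by positivity
  have hpoint : ∀ j ∈ range (m + 1), (log μ - κ⁻¹) + μ⁻¹ * (j + κ - μ) - (κ * μ)⁻¹ * (j + κ - μ) ^ 2
      ≤ digamma (j + κ) := fun j _ => by
    have hx : κ ≤ (j : ℝ) + κ := le_add_of_nonneg_left j.cast_nonneg
    have hx0 : 0 < (j : ℝ) + κ := hκ.trans_le hx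
    have hsq : (j + κ - μ) ^ 2 / ((j + κ) * μ) ≤ (κ * μ)⁻¹ * (j + κ - μ) ^ 2 := by
      rw [← div_eq_inv_mul]
      gcongr
    have hlin : (j + κ - μ) / μ = μ⁻¹ * (j + κ - μ) := div_eq_inv_mul _ _
    linarith [inv_anti₀ hκ hx, log_add_sub_div_sub_sq_div_le_log hx0 hμ,
      log_sub_inv_le_digamma hx0]
  have h := sub_mul_sum_le_sum_mul_of_quadratic_le
    (fun j _ => eval_bernsteinPolynomial_nonneg m p hp0 hp1 j) (sum_eval_bernsteinPolynomial m p)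
    (sum_eval_bernsteinPolynomial_mul_add m p κ) hpoint
  rw [sum_eval_bernsteinPolynomial_mul_sq] at h
  have hvar : (κ * μ)⁻¹ * (m * p * (1 - p)) ≤ κ⁻¹ := by
    rw [mul_inv, mul_assoc]
    refine mul_le_of_le_one_right (inv_nonneg.2 hκ.le) ?_
    rw [inv_mul_le_one₀ hμ]
    have : 0 ≤ (m : ℝ) * p := by positivity
    nlinarith
  have : 2 / κ = κ⁻¹ + κ⁻¹ := by ring
  linarith

end DigammaOfBinomial

/-- If `W_n − k ~ Binomial(n − k − 1, p)` with `k ≥ p/(1−p)` and `0 < p < 1`,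
then `|E[ψ(W_n)] − log(np)| ≤ 2/k + k/(np)`. -/
theorem stmt7 (n k : ℕ) (p : ℝ) (hp : 0 < p) (hp1 : p < 1)
    (hk : 1 ≤ k) (hkn : k + 1 < n) (hkp : p / (1 - p) ≤ (k : ℝ)) :
    |(∑ j ∈ Finset.range (n - k),
        ((n - k - 1).choose j : ℝ) * p ^ j * (1 - p) ^ (n - k - 1 - j) *
          digamma (j + k)) - Real.log (n * p)|
      ≤ 2 / k + k / (n * p) := by
  obtain ⟨m, rfl⟩ : ∃ m, n = m + k + 1 := ⟨n - k - 1, by omega⟩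
  have hm : m + k + 1 - k = m + 1 := by omega
  simp only [hm, Nat.add_sub_cancel, ← eval_bernsteinPolynomial]
  have hκ : (0 : ℝ) < k := by exact_mod_cast hk
  set N := ((m + k + 1 : ℕ) : ℝ) * p
  have hN : 0 < N := by positivity
  have hμN : m * p + k - N = k - (k + 1) * p := by push_cast [N]; ring
  have hkp' : (k + 1) * p ≤ k := by
    rw [div_le_iff₀ (sub_pos.2 hp1)] at hkp
    linarith
  have hlog_lower : log N ≤ log (m * p + k) := log_le_log hN (by linarith)
  have hlog_upper : log (m * p + k) ≤ log N + k / N := by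
    refine (log_le_log_add_sub_div (by positivity) hN).trans ?_
    gcongr
    linarith [mul_pos (by positivity : (0 : ℝ) < k + 1) hp]
  have hE_le := sum_eval_bernsteinPolynomial_mul_digamma_le m hp.le hp1.le hκ
  have hE_ge := log_sub_two_div_le_sum_eval_bernsteinPolynomial_mul_digamma m hp.le hp1.le hκ
  have : 0 ≤ (k : ℝ) / N := by positivity
  rw [abs_le]
  constructor <;> linarith
end
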